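/- Assume (A1)–(A3): F : ℝ^d → ℝ is convex, differentiable with L-Lipschitz gradient; H : P2(ℝ^d) → ℝ ∪ {+∞} is proper, lower semicontinuous with respect to W2, and convex along generalized geodesics, with dom(H) ⊆ P2^r(ℝ^d); and argmin G ≠ ∅, where G(μ) = ∫ F dμ + H(μ). Let 0 < τ < 1/L, μ ∈ P2(ℝ^d), η = (I − τ∇F)_# μ, and μ̄⁺ = J_{τ,H}(η), the unique minimizer of ν ↦ H(ν) + (1/(2τ)) W2²(ν, η). Then for every ε ≥ 0 and every absolutely continuous μ̄ ∈ P2^r(ℝ^d) with W2(μ̄, μ) ≤ ε, one has G(μ̄⁺) − G(μ̄) ≤ (ε/τ)(W2(μ̄, η) + W2(μ̄⁺, η) + ε). -/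

import Mathlib

open MeasureTheory Filter Topology ENNReal

noncomputable section

/-- Euclidean space ℝ^d. -/
abbrev Ed (d : ℕ) := EuclideanSpace ℝ (Fin d)

/-- `P2 d`: Borel probability measures on ℝ^d with finite second moment. -/
def P2 (d : ℕ) : Set (Measure (Ed d)) :=
  {μ | IsProbabilityMeasure μ ∧ ∫⁻ x, ENNReal.ofReal (‖x‖ ^ 2) ∂μ < ⊤}

/-- A coupling of `μ` and `ν`. -/
def IsCoupling {d : ℕ} (γ : Measure (Ed d × Ed d)) (μ ν : Measure (Ed d)) : Prop :=
  IsProbabilityMeasure γ ∧ γ.map Prod.fst = μ ∧ γ.map Prod.snd = ν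

/-- `p`-th power transport cost of a plan `γ`. -/
def Wcost {d : ℕ} (p : ℝ) (γ : Measure (Ed d × Ed d)) : ℝ≥0∞ :=
  ∫⁻ z, ENNReal.ofReal (‖z.1 - z.2‖ ^ p) ∂γ

/-- Minimal `p`-th power transport cost between `μ` and `ν`. -/
def minCost {d : ℕ} (p : ℝ) (μ ν : Measure (Ed d)) : ℝ≥0∞ :=
  ⨅ γ : {γ : Measure (Ed d × Ed d) // IsCoupling γ μ ν}, Wcost p γ.1

/-- The `p`-Wasserstein distance. -/
def Wp {d : ℕ} (p : ℝ) (μ ν : Measure (Ed d)) : ℝ :=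
  (minCost p μ ν ^ (1 / p)).toReal

/-- The 2-Wasserstein distance. -/
def W2 {d : ℕ} (μ ν : Measure (Ed d)) : ℝ := Wp 2 μ ν

/-- Optimal transport plan for the quadratic cost. -/
def IsOptimalPlan {d : ℕ} (γ : Measure (Ed d × Ed d)) (μ ν : Measure (Ed d)) : Prop :=
  IsCoupling γ μ ν ∧ Wcost 2 γ = minCost 2 μ ν

/-- `curve` is a generalized geodesic between `μ0` and `μ1` with base `base`. -/
def IsGenGeodesic {d : ℕ} (curve : ℝ → Measure (Ed d))
    (μ0 μ1 base : Measure (Ed d)) : Prop :=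
  ∃ γ : Measure (Ed d × Ed d × Ed d),
    IsProbabilityMeasure γ ∧
    IsOptimalPlan (γ.map (fun z => (z.1, z.2.1))) base μ0 ∧
    IsOptimalPlan (γ.map (fun z => (z.1, z.2.2))) base μ1 ∧
    ∀ t ∈ Set.Icc (0 : ℝ) 1,
      curve t = γ.map (fun z => (1 - t) • z.2.1 + t • z.2.2)

/-- Convexity along generalized geodesics. -/
def ConvexAlongGenGeod {d : ℕ} (G : Measure (Ed d) → EReal) : Prop :=
  ∀ μ0 ∈ P2 d, ∀ μ1 ∈ P2 d, ∀ base ∈ P2 d,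
    ∃ curve : ℝ → Measure (Ed d), IsGenGeodesic curve μ0 μ1 base ∧
      ∀ t ∈ Set.Icc (0 : ℝ) 1,
        G (curve t) ≤ ((1 - t : ℝ) : EReal) * G μ0 + ((t : ℝ) : EReal) * G μ1

/-- `G` is proper: never `⊥` and finite somewhere on `P2`. -/
def ProperOn {d : ℕ} (G : Measure (Ed d) → EReal) : Prop :=
  (∀ μ, G μ ≠ ⊥) ∧ ∃ μ ∈ P2 d, G μ ≠ ⊤

/-- Sequential lower semicontinuity with respect to `W2`. -/
def LscW2 {d : ℕ} (G : Measure (Ed d) → EReal) : Prop :=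
  ∀ μ ∈ P2 d, ∀ s : ℕ → Measure (Ed d), (∀ n, s n ∈ P2 d) →
    Tendsto (fun n => W2 (s n) μ) atTop (𝓝 0) →
    G μ ≤ liminf (fun n => G (s n)) atTop

/-- The JKO (Moreau–Yosida) energy `ν ↦ G ν + (1/(2τ)) W2²(ν, μ)`. -/
def JKOEnergy {d : ℕ} (G : Measure (Ed d) → EReal) (τ : ℝ)
    (μ ν : Measure (Ed d)) : EReal :=
  G ν + ((1 / (2 * τ) * (W2 ν μ) ^ 2 : ℝ) : EReal)

/-- `ν` is a minimizer over `P2` of the JKO energy with base point `μ`. -/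
def IsJKOMin {d : ℕ} (G : Measure (Ed d) → EReal) (τ : ℝ)
    (μ ν : Measure (Ed d)) : Prop :=
  ν ∈ P2 d ∧ ∀ ρ ∈ P2 d, JKOEnergy G τ μ ν ≤ JKOEnergy G τ μ ρ

/-- `μ` is a global minimizer of `G` over `P2`. -/
def IsArgminG {d : ℕ} (G : Measure (Ed d) → EReal) (μ : Measure (Ed d)) : Prop :=
  μ ∈ P2 d ∧ ∀ ν ∈ P2 d, G μ ≤ G ν

/-- The infimum of `G` over `P2`. -/
def infG {d : ℕ} (G : Measure (Ed d) → EReal) : EReal := sInf (G '' P2 d)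

/-- Convergence in the topology `τ_{w,2}`: integrals of continuous functions with
subquadratic growth converge. -/
def TendstoWeak2 {d : ℕ} (s : ℕ → Measure (Ed d)) (μ : Measure (Ed d)) : Prop :=
  ∀ f : Ed d → ℝ, Continuous f →
    Tendsto (fun x => f x / (1 + ‖x‖ ^ 2)) (comap (fun x : Ed d => ‖x‖) atTop) (𝓝 0) →
    Tendsto (fun n => ∫ x, f x ∂(s n)) atTop (𝓝 (∫ x, f x ∂μ))

/-- Narrow convergence: integrals of bounded continuous functions converge. -/
def TendstoNarrow {d : ℕ} (s : ℕ → Measure (Ed d)) (μ : Measure (Ed d)) : Prop :=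
  ∀ f : Ed d → ℝ, Continuous f → (∃ M, ∀ x, |f x| ≤ M) →
    Tendsto (fun n => ∫ x, f x ∂(s n)) atTop (𝓝 (∫ x, f x ∂μ))

/-- The pushforward by the explicit gradient step `x ↦ x - τ ∇F(x)`. -/
def gradStep {d : ℕ} (f' : Ed d → Ed d) (τ : ℝ) (μ : Measure (Ed d)) : Measure (Ed d) :=
  μ.map (fun x => x - τ • f' x)

/-- The composite objective `G(μ) = ∫ F dμ + H(μ)`. -/
def Gsum {d : ℕ} (F : Ed d → ℝ) (H : Measure (Ed d) → EReal)
    (μ : Measure (Ed d)) : EReal :=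
  ((∫ x, F x ∂μ : ℝ) : EReal) + H μ

end

section helpers
open scoped ProbabilityTheory
open MeasureTheory

local notation "⟪" x ", " y "⟫" => @inner ℝ _ _ x y

variable {d : ℕ}

lemma aux_line_hasDerivAt (F : Ed d → ℝ) (f' : Ed d → Ed d)
    (hgrad : ∀ x, HasGradientAt F (f' x) x) (x v : Ed d) (t : ℝ) :
    HasDerivAt (fun s : ℝ => F (x + s • v)) ⟪f' (x + t • v), v⟫ t := by
  have h1 : HasDerivAt (fun s : ℝ => x + s • v) v t := by
    simpa using ((hasDerivAt_id t).smul_const v).const_add x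
  have h2 := (hgrad (x + t • v)).hasFDerivAt
  have h3 := h2.comp_hasDerivAt t h1
  simpa [InnerProductSpace.toDual_apply_apply, Function.comp_def] using h3

lemma aux_convex_grad (F : Ed d → ℝ) (f' : Ed d → Ed d)
    (hconv : ConvexOn ℝ Set.univ F)
    (hgrad : ∀ x, HasGradientAt F (f' x) x) (x y : Ed d) :
    F x - F y ≤ ⟪f' x, x - y⟫ := by
  rcases eq_or_ne x y with rfl | hxy
  · simp
  have hg : ConvexOn ℝ Set.univ (fun s : ℝ => F (y + s • (x - y))) := by
    have h := hconv.comp_affineMap (AffineMap.lineMap y x)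
    have heq : (Set.univ : Set ℝ) = (AffineMap.lineMap y x : ℝ →ᵃ[ℝ] Ed d) ⁻¹' Set.univ := by simp
    rw [heq]
    have hfun : (fun s : ℝ => F (y + s • (x - y))) = F ∘ AffineMap.lineMap y x := by
      funext s
      simp only [Function.comp_apply, AffineMap.lineMap_apply_module]
      congr 1
      module
    rw [hfun]
    exact h
  have hder := aux_line_hasDerivAt F f' hgrad y (x - y) 1
  rw [show y + (1:ℝ) • (x - y) = x by simp] at hder
  have hs := hg.slope_le_of_hasDerivAt (Set.mem_univ (0:ℝ)) (Set.mem_univ (1:ℝ)) one_pos hder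
  rw [slope_def_field] at hs
  simpa using hs

lemma aux_smooth (F : Ed d → ℝ) (f' : Ed d → Ed d)
    (hgrad : ∀ x, HasGradientAt F (f' x) x) {L : ℝ} (hL : 0 ≤ L)
    (hLip : LipschitzWith L.toNNReal f') (x w : Ed d) :
    F w ≤ F x + ⟪f' x, w - x⟫ + L / 2 * ‖w - x‖ ^ 2 := by
  set v := w - x with hv
  have hcont : Continuous f' := hLip.continuous
  have hder : ∀ t : ℝ, HasDerivAt (fun s : ℝ => F (x + s • v)) ⟪f' (x + t • v), v⟫ t :=
    fun t => aux_line_hasDerivAt F f' hgrad x v t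
  have hgc : Continuous fun t : ℝ => ⟪f' (x + t • v), v⟫ := by
    exact (hcont.comp (continuous_const.add (continuous_id.smul continuous_const))).inner
      continuous_const
  have hftc : (∫ t in (0:ℝ)..1, ⟪f' (x + t • v), v⟫) = F (x + (1:ℝ) • v) - F (x + (0:ℝ) • v) :=
    intervalIntegral.integral_eq_sub_of_hasDerivAt (fun t _ => hder t) (hgc.intervalIntegrable 0 1)
  have hbound : ∀ t ∈ Set.uIcc (0:ℝ) 1, ⟪f' (x + t • v), v⟫ ≤ ⟪f' x, v⟫ + (L * ‖v‖ ^ 2) * t := by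
    intro t ht
    rw [Set.uIcc_of_le (by norm_num : (0:ℝ) ≤ 1)] at ht
    have h0 : ⟪f' (x + t • v) - f' x, v⟫ ≤ ‖f' (x + t • v) - f' x‖ * ‖v‖ := real_inner_le_norm _ _
    have h2 : ‖f' (x + t • v) - f' x‖ ≤ L * (t * ‖v‖) := by
      have h3 := hLip.dist_le_mul (x + t • v) x
      rw [dist_eq_norm, dist_eq_norm, Real.coe_toNNReal _ hL] at h3
      have h4 : ‖x + t • v - x‖ = t * ‖v‖ := by
        rw [add_sub_cancel_left, norm_smul, Real.norm_eq_abs, abs_of_nonneg ht.1]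
      rw [h4] at h3; exact h3
    have h5 : ⟪f' (x + t • v), v⟫ = ⟪f' x, v⟫ + ⟪f' (x + t • v) - f' x, v⟫ := by
      rw [inner_sub_left]; ring
    have h6 : ‖f' (x + t • v) - f' x‖ * ‖v‖ ≤ L * (t * ‖v‖) * ‖v‖ :=
      mul_le_mul_of_nonneg_right h2 (norm_nonneg v)
    nlinarith [norm_nonneg v]
  have hmono := intervalIntegral.integral_mono_on (μ := volume) (by norm_num : (0:ℝ) ≤ 1)
    (hgc.intervalIntegrable 0 1)
    ((by fun_prop : Continuous fun t : ℝ => ⟪f' x, v⟫ + (L * ‖v‖ ^ 2) * t).intervalIntegrable 0 1)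
    (by intro t ht; exact hbound t (by rwa [Set.uIcc_of_le (by norm_num : (0:ℝ) ≤ 1)] ))
  have hval : (∫ t in (0:ℝ)..1, (⟪f' x, v⟫ + (L * ‖v‖ ^ 2) * t)) = ⟪f' x, v⟫ + L / 2 * ‖v‖ ^ 2 := by
    rw [intervalIntegral.integral_add (continuous_const.intervalIntegrable 0 1)
      ((by fun_prop : Continuous fun t : ℝ => (L * ‖v‖ ^ 2) * t).intervalIntegrable 0 1),
      intervalIntegral.integral_const_mul, integral_id,
      intervalIntegral.integral_const]
    simp only [smul_eq_mul]
    ring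
  rw [hftc] at hmono
  rw [hval] at hmono
  have h7 : F (x + (1:ℝ) • v) = F w := by rw [one_smul, hv]; congr 1; abel
  have h8 : F (x + (0:ℝ) • v) = F x := by simp
  rw [h7, h8] at hmono
  linarith

lemma aux_identity (x y w e : Ed d) :
    2 * ⟪x - e, w - y⟫ + ‖w - x‖ ^ 2 = ‖x - y‖ ^ 2 - ‖y - e‖ ^ 2 + ‖w - e‖ ^ 2 := by
  have h1 : ∀ a b : Ed d, ‖a - b‖ ^ 2 = ‖a‖ ^ 2 - 2 * ⟪a, b⟫ + ‖b‖ ^ 2 := fun a b => by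
    rw [@norm_sub_sq_real]
  simp only [h1, inner_sub_left, inner_sub_right]
  linear_combination ((2:ℝ) * real_inner_comm x w - (2:ℝ) * real_inner_comm y e + (2:ℝ) * real_inner_comm e w - (2:ℝ) * real_inner_comm x y + (2:ℝ) * real_inner_comm y x + (2:ℝ) * real_inner_comm w e) - ((4:ℝ) * real_inner_comm x w - (2:ℝ) * real_inner_comm e w - (4:ℝ) * real_inner_comm x y + (4:ℝ) * real_inner_comm e y)

lemma aux_pointwise (F : Ed d → ℝ) (f' : Ed d → Ed d)
    (hconv : ConvexOn ℝ Set.univ F)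
    (hgrad : ∀ x, HasGradientAt F (f' x) x) {L τ : ℝ} (hL : 0 < L)
    (hLip : LipschitzWith L.toNNReal f') (hτ0 : 0 < τ) (hτL : τ * L ≤ 1)
    (y x w : Ed d) :
    F w - 1 / (2 * τ) * ‖w - (x - τ • f' x)‖ ^ 2 ≤
      F y + 1 / (2 * τ) * (‖x - y‖ ^ 2 - ‖y - (x - τ • f' x)‖ ^ 2) := by
  have hA := aux_convex_grad F f' hconv hgrad x y
  have hB := aux_smooth F f' hgrad hL.le hLip x w
  set e := x - τ • f' x with he
  have hxe : x - e = τ • f' x := by rw [he]; abel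
  have hid := aux_identity x y w e
  have hinner : ⟪f' x, w - y⟫ = 1 / τ * ⟪x - e, w - y⟫ := by
    rw [hxe, real_inner_smul_left]
    field_simp
  have hsplit : ⟪f' x, x - y⟫ + ⟪f' x, w - x⟫ = ⟪f' x, w - y⟫ := by
    rw [← inner_add_right]
    congr 1
    abel
  have hquad : L / 2 * ‖w - x‖ ^ 2 ≤ 1 / (2 * τ) * ‖w - x‖ ^ 2 := by
    apply mul_le_mul_of_nonneg_right _ (sq_nonneg _)
    rw [div_le_div_iff₀ (by norm_num) (by positivity)]
    nlinarith
  have hkey : 1 / (2 * τ) * (‖x - y‖ ^ 2 - ‖y - e‖ ^ 2) + 1 / (2 * τ) * ‖w - e‖ ^ 2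
      = 1 / τ * ⟪x - e, w - y⟫ + 1 / (2 * τ) * ‖w - x‖ ^ 2 := by
    linear_combination (-(1 / (2 * τ))) * hid
  linarith

lemma wcost_two (γ : Measure (Ed d × Ed d)) :
    Wcost 2 γ = ∫⁻ z, ENNReal.ofReal (‖z.1 - z.2‖ ^ (2:ℕ)) ∂γ := by
  unfold Wcost
  congr 1
  funext z
  rw [show ((2:ℝ)) = ((2:ℕ):ℝ) by norm_num, Real.rpow_natCast]

lemma lintegral_normsq_fst {σ : Measure (Ed d × Ed d)} {μ ν : Measure (Ed d)}
    (hc : IsCoupling σ μ ν) :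
    ∫⁻ z, ENNReal.ofReal (‖z.1‖ ^ 2) ∂σ = ∫⁻ x, ENNReal.ofReal (‖x‖ ^ 2) ∂μ := by
  rw [← hc.2.1, lintegral_map (by fun_prop) measurable_fst]

lemma lintegral_normsq_snd {σ : Measure (Ed d × Ed d)} {μ ν : Measure (Ed d)}
    (hc : IsCoupling σ μ ν) :
    ∫⁻ z, ENNReal.ofReal (‖z.2‖ ^ 2) ∂σ = ∫⁻ x, ENNReal.ofReal (‖x‖ ^ 2) ∂ν := by
  rw [← hc.2.2, lintegral_map (by fun_prop) measurable_snd]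

lemma coupling_cost_finite {σ : Measure (Ed d × Ed d)} {μ ν : Measure (Ed d)}
    (hc : IsCoupling σ μ ν) (hμ : μ ∈ P2 d) (hν : ν ∈ P2 d) : Wcost 2 σ < ⊤ := by
  rw [wcost_two]
  have hb : ∀ z : Ed d × Ed d, ENNReal.ofReal (‖z.1 - z.2‖ ^ 2) ≤
      2 * ENNReal.ofReal (‖z.1‖ ^ 2) + 2 * ENNReal.ofReal (‖z.2‖ ^ 2) := by
    intro z
    have h2 : ‖z.1 - z.2‖ ≤ ‖z.1‖ + ‖z.2‖ := norm_sub_le z.1 z.2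
    have h1 : ‖z.1 - z.2‖ ^ 2 ≤ 2 * ‖z.1‖ ^ 2 + 2 * ‖z.2‖ ^ 2 := by
      have h3 : ‖z.1 - z.2‖ ^ 2 ≤ (‖z.1‖ + ‖z.2‖) ^ 2 :=
        pow_le_pow_left₀ (norm_nonneg _) h2 2
      nlinarith [sq_nonneg (‖z.1‖ - ‖z.2‖)]
    calc ENNReal.ofReal (‖z.1 - z.2‖ ^ 2) ≤ ENNReal.ofReal (2 * ‖z.1‖ ^ 2 + 2 * ‖z.2‖ ^ 2) :=
          ENNReal.ofReal_le_ofReal h1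
      _ = 2 * ENNReal.ofReal (‖z.1‖ ^ 2) + 2 * ENNReal.ofReal (‖z.2‖ ^ 2) := by
          rw [ENNReal.ofReal_add (by positivity) (by positivity),
            ENNReal.ofReal_mul (by norm_num), ENNReal.ofReal_mul (by norm_num),
            ENNReal.ofReal_ofNat]
  calc (∫⁻ z, ENNReal.ofReal (‖z.1 - z.2‖ ^ 2) ∂σ)
      ≤ ∫⁻ z, (2 * ENNReal.ofReal (‖z.1‖ ^ 2) + 2 * ENNReal.ofReal (‖z.2‖ ^ 2)) ∂σ :=
        lintegral_mono hb
    _ = 2 * (∫⁻ z, ENNReal.ofReal (‖z.1‖ ^ 2) ∂σ) + 2 * (∫⁻ z, ENNReal.ofReal (‖z.2‖ ^ 2) ∂σ) := by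
        rw [lintegral_add_left (by fun_prop), lintegral_const_mul _ (by fun_prop),
          lintegral_const_mul _ (by fun_prop)]
    _ < ⊤ := by
        rw [lintegral_normsq_fst hc, lintegral_normsq_snd hc]
        exact ENNReal.add_lt_top.2 ⟨ENNReal.mul_lt_top (by simp) hμ.2,
          ENNReal.mul_lt_top (by simp) hν.2⟩

lemma isCoupling_prod {μ ν : Measure (Ed d)} (hμ : IsProbabilityMeasure μ)
    (hν : IsProbabilityMeasure ν) : IsCoupling (μ.prod ν) μ ν := by
  haveI := hμ; haveI := hν
  refine ⟨inferInstance, ?_, ?_⟩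
  · rw [Measure.map_fst_prod]; simp
  · rw [Measure.map_snd_prod]; simp

lemma minCost_lt_top {μ ν : Measure (Ed d)} (hμ : μ ∈ P2 d) (hν : ν ∈ P2 d) :
    minCost 2 μ ν < ⊤ :=
  lt_of_le_of_lt
    (iInf_le _ (⟨μ.prod ν, isCoupling_prod hμ.1 hν.1⟩ : {γ // IsCoupling γ μ ν}))
    (coupling_cost_finite (isCoupling_prod hμ.1 hν.1) hμ hν)

lemma W2_nonneg (μ ν : Measure (Ed d)) : 0 ≤ W2 μ ν := ENNReal.toReal_nonneg

lemma W2_sq (μ ν : Measure (Ed d)) : W2 μ ν ^ 2 = (minCost 2 μ ν).toReal := by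
  unfold W2 Wp
  rw [← ENNReal.toReal_rpow, ← Real.rpow_natCast (_ ^ _) 2,
    ← Real.rpow_mul ENNReal.toReal_nonneg]
  norm_num

lemma W2_sq_le_cost {μ ν : Measure (Ed d)} {σ' : Measure (Ed d × Ed d)}
    (hc : IsCoupling σ' μ ν) (hfin : Wcost 2 σ' ≠ ⊤) :
    W2 μ ν ^ 2 ≤ (Wcost 2 σ').toReal := by
  rw [W2_sq]
  exact ENNReal.toReal_mono hfin (iInf_le _ (⟨σ', hc⟩ : {γ // IsCoupling γ μ ν}))

lemma exists_near_opt {μ ν : Measure (Ed d)} (hμ : μ ∈ P2 d) (hν : ν ∈ P2 d)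
    {δ : ℝ} (hδ : 0 < δ) :
    ∃ σ, IsCoupling σ μ ν ∧ Wcost 2 σ < ⊤ ∧ (Wcost 2 σ).toReal ≤ W2 μ ν ^ 2 + δ := by
  have hfin := minCost_lt_top hμ hν
  have hlt : minCost 2 μ ν < minCost 2 μ ν + ENNReal.ofReal δ := by
    apply ENNReal.lt_add_right hfin.ne
    simp [ENNReal.ofReal_eq_zero, not_le, hδ]
  rw [minCost] at hlt
  obtain ⟨⟨σ, hσ⟩, hσlt⟩ := iInf_lt_iff.mp hlt
  have htop : minCost 2 μ ν + ENNReal.ofReal δ < ⊤ :=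
    ENNReal.add_lt_top.2 ⟨hfin, ENNReal.ofReal_lt_top⟩
  refine ⟨σ, hσ, hσlt.trans htop, ?_⟩
  have h2 := ENNReal.toReal_mono htop.ne hσlt.le
  rw [ENNReal.toReal_add hfin.ne ENNReal.ofReal_ne_top, ENNReal.toReal_ofReal hδ.le] at h2
  rw [W2_sq]
  exact h2

lemma cost_toReal (σ : Measure (Ed d × Ed d)) :
    ∫ z, ‖z.1 - z.2‖ ^ 2 ∂σ = (Wcost 2 σ).toReal := by
  rw [wcost_two, integral_eq_lintegral_of_nonneg_ae
    (Filter.Eventually.of_forall fun z => sq_nonneg _)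
    (Continuous.aestronglyMeasurable (f := fun z : Ed d × Ed d => ‖z.1 - z.2‖ ^ 2) ((continuous_fst.sub continuous_snd).norm.pow 2))]

lemma P2_integrable_normsq {μ : Measure (Ed d)} (hμ : μ ∈ P2 d) :
    Integrable (fun x => ‖x‖ ^ 2) μ := by
  refine ⟨(continuous_norm.pow 2).aestronglyMeasurable, ?_⟩
  rw [hasFiniteIntegral_iff_ofReal (Filter.Eventually.of_forall fun x => sq_nonneg _)]
  exact hμ.2

lemma P2_map {μ : Measure (Ed d)} (hμ : μ ∈ P2 d) {T : Ed d → Ed d} (hT : Measurable T)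
    {K : ℝ} (hK : 0 ≤ K) (hgrowth : ∀ x, ‖T x‖ ^ 2 ≤ K * (1 + ‖x‖ ^ 2)) :
    μ.map T ∈ P2 d := by
  haveI := hμ.1
  refine ⟨Measure.isProbabilityMeasure_map hT.aemeasurable, ?_⟩
  rw [lintegral_map (by fun_prop) hT]
  have hb : ∀ x, ENNReal.ofReal (‖T x‖ ^ 2) ≤
      ENNReal.ofReal K * (1 + ENNReal.ofReal (‖x‖ ^ 2)) := by
    intro x
    rw [← ENNReal.ofReal_one, ← ENNReal.ofReal_add one_pos.le (sq_nonneg _),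
      ← ENNReal.ofReal_mul hK]
    exact ENNReal.ofReal_le_ofReal (hgrowth x)
  calc ∫⁻ x, ENNReal.ofReal (‖T x‖ ^ 2) ∂μ
      ≤ ∫⁻ x, ENNReal.ofReal K * (1 + ENNReal.ofReal (‖x‖ ^ 2)) ∂μ := lintegral_mono hb
    _ = ENNReal.ofReal K * (μ Set.univ + ∫⁻ x, ENNReal.ofReal (‖x‖ ^ 2) ∂μ) := by
        rw [lintegral_const_mul _ (by fun_prop), lintegral_add_left measurable_const,
          lintegral_one]
    _ < ⊤ := ENNReal.mul_lt_top ENNReal.ofReal_lt_top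
        (ENNReal.add_lt_top.2 ⟨by simp [measure_univ], hμ.2⟩)

lemma integrable_of_quad_bound {μ : Measure (Ed d)} (hμ : μ ∈ P2 d) {g : Ed d → ℝ}
    (hg : Continuous g) {C : ℝ} (hbound : ∀ x, |g x| ≤ C * (1 + ‖x‖ ^ 2)) :
    Integrable g μ := by
  haveI := hμ.1
  have h1 : Integrable (fun x : Ed d => C * (1 + ‖x‖ ^ 2)) μ :=
    ((integrable_const (1 : ℝ)).add (P2_integrable_normsq hμ)).const_mul C
  exact h1.mono' hg.aestronglyMeasurable
    (Filter.Eventually.of_forall (by simpa [Real.norm_eq_abs] using hbound))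

lemma integrable_comp_fst {σ : Measure (Ed d × Ed d)} {μ ν : Measure (Ed d)}
    (hc : IsCoupling σ μ ν) {g : Ed d → ℝ} (hint : Integrable g μ) :
    Integrable (fun p : Ed d × Ed d => g p.1) σ := by
  have h : Integrable g (σ.map Prod.fst) := by rwa [hc.2.1]
  exact (integrable_map_measure h.aestronglyMeasurable measurable_fst.aemeasurable).mp h

lemma integrable_comp_snd {σ : Measure (Ed d × Ed d)} {μ ν : Measure (Ed d)}
    (hc : IsCoupling σ μ ν) {g : Ed d → ℝ} (hint : Integrable g ν) :
    Integrable (fun p : Ed d × Ed d => g p.2) σ := by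
  have h : Integrable g (σ.map Prod.snd) := by rwa [hc.2.2]
  exact (integrable_map_measure h.aestronglyMeasurable measurable_snd.aemeasurable).mp h

lemma integral_comp_fst {σ : Measure (Ed d × Ed d)} {μ ν : Measure (Ed d)}
    (hc : IsCoupling σ μ ν) {g : Ed d → ℝ} (hg : AEStronglyMeasurable g μ) :
    ∫ p, g p.1 ∂σ = ∫ x, g x ∂μ := by
  rw [← hc.2.1, integral_map measurable_fst.aemeasurable (by rwa [hc.2.1])]

lemma integral_comp_snd {σ : Measure (Ed d × Ed d)} {μ ν : Measure (Ed d)}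
    (hc : IsCoupling σ μ ν) {g : Ed d → ℝ} (hg : AEStronglyMeasurable g ν) :
    ∫ p, g p.2 ∂σ = ∫ x, g x ∂ν := by
  rw [← hc.2.2, integral_map measurable_snd.aemeasurable (by rwa [hc.2.2])]

lemma coupling_integrable {σ : Measure (Ed d × Ed d)} {μ ν : Measure (Ed d)}
    (hc : IsCoupling σ μ ν) (hμ : μ ∈ P2 d) (hν : ν ∈ P2 d)
    {g : Ed d × Ed d → ℝ} (hg : Continuous g) {C : ℝ}
    (hbound : ∀ p, |g p| ≤ C * (1 + ‖p.1‖ ^ 2 + ‖p.2‖ ^ 2)) : Integrable g σ := by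
  haveI := hc.1
  have h1 : Integrable (fun p : Ed d × Ed d => ‖p.1‖ ^ 2) σ :=
    integrable_comp_fst hc (P2_integrable_normsq hμ)
  have h2 : Integrable (fun p : Ed d × Ed d => ‖p.2‖ ^ 2) σ :=
    integrable_comp_snd hc (P2_integrable_normsq hν)
  have h3 : Integrable (fun p : Ed d × Ed d => C * (1 + ‖p.1‖ ^ 2 + ‖p.2‖ ^ 2)) σ :=
    (((integrable_const (1 : ℝ)).add h1).add h2).const_mul C
  exact h3.mono' hg.aestronglyMeasurable
    (Filter.Eventually.of_forall (by simpa [Real.norm_eq_abs] using hbound))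

lemma glue {T : Ed d → Ed d} (hT : Measurable T)
    (σ ρ : Measure (Ed d × Ed d)) [IsProbabilityMeasure σ] [IsProbabilityMeasure ρ]
    (hfst : ρ.map Prod.fst = (σ.map Prod.snd).map T) :
    ∃ γ : Measure ((Ed d × Ed d) × Ed d),
      γ.map Prod.fst = σ ∧ γ.map (fun z => (T z.1.2, z.2)) = ρ := by
  set κ : ProbabilityTheory.Kernel (Ed d × Ed d) (Ed d) :=
    ρ.condKernel.comap (fun p : Ed d × Ed d => T p.2) (hT.comp measurable_snd) with hκ
  haveI : ProbabilityTheory.IsMarkovKernel κ := by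
    rw [hκ]; infer_instance
  refine ⟨σ ⊗ₘ κ, ?_, ?_⟩
  · have h := Measure.fst_compProd σ κ
    rwa [Measure.fst] at h
  · have hm : Measurable (fun z : (Ed d × Ed d) × Ed d => (T z.1.2, z.2)) :=
      (hT.comp (measurable_snd.comp measurable_fst)).prodMk measurable_snd
    ext s hs
    rw [Measure.map_apply hm hs, Measure.compProd_apply (hm hs)]
    have hmeas : Measurable fun e : Ed d => ρ.condKernel e (Prod.mk e ⁻¹' s) :=
      ProbabilityTheory.Kernel.measurable_kernel_prodMk_left hs
    calc (∫⁻ p, κ p (Prod.mk p ⁻¹' ((fun z : (Ed d × Ed d) × Ed d => (T z.1.2, z.2)) ⁻¹' s)) ∂σ)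
        = ∫⁻ p : Ed d × Ed d, ρ.condKernel (T p.2) (Prod.mk (T p.2) ⁻¹' s) ∂σ := by
          simp only [hκ, ProbabilityTheory.Kernel.comap_apply]
          rfl
      _ = ∫⁻ x, ρ.condKernel (T x) (Prod.mk (T x) ⁻¹' s) ∂(σ.map Prod.snd) := by
          rw [lintegral_map (show Measurable fun x : Ed d =>
            ρ.condKernel (T x) (Prod.mk (T x) ⁻¹' s) from hmeas.comp hT) measurable_snd]
      _ = ∫⁻ e, ρ.condKernel e (Prod.mk e ⁻¹' s) ∂((σ.map Prod.snd).map T) := by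
          rw [lintegral_map hmeas hT]
      _ = ∫⁻ e, ρ.condKernel e (Prod.mk e ⁻¹' s) ∂(ρ.fst) := by
          rw [← hfst]; rfl
      _ = (ρ.fst ⊗ₘ ρ.condKernel) s := (Measure.compProd_apply hs).symm
      _ = ρ s := by rw [ρ.disintegrate ρ.condKernel]

end helpers

set_option maxHeartbeats 1000000 in
/-- Energy-decrease estimate for the proximal-gradient step at an approximate
input: if `W2(μ̄, μ) ≤ ε` with `μ̄` absolutely continuous, then
`G(μ̄⁺) − G(μ̄) ≤ (ε/τ)(W2(μ̄,η) + W2(μ̄⁺,η) + ε)`, written additively. -/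
theorem prox_grad_energy_decrease {d : ℕ}
    (F : Ed d → ℝ) (f' : Ed d → Ed d)
    (hFconv : ConvexOn ℝ Set.univ F)
    (hFgrad : ∀ x, HasGradientAt F (f' x) x)
    (L : ℝ) (hL : 0 < L) (hLip : LipschitzWith L.toNNReal f')
    (H : Measure (Ed d) → EReal)
    (hHproper : ProperOn H) (hHlsc : LscW2 H) (hHconv : ConvexAlongGenGeod H)
    (hHdom : ∀ μ : Measure (Ed d), H μ ≠ ⊤ → μ ≪ (volume : Measure (Ed d)))
    (hArgmin : ∃ μstar, IsArgminG (Gsum F H) μstar)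
    (J : ℝ → Measure (Ed d) → Measure (Ed d))
    (hJ : ∀ t : ℝ, 0 < t → ∀ η ∈ P2 d, IsJKOMin H t η (J t η))
    (τ : ℝ) (hτ0 : 0 < τ) (hτL : τ < 1 / L)
    (μ : Measure (Ed d)) (hμ : μ ∈ P2 d)
    (ε : ℝ) (hε : 0 ≤ ε)
    (μbar : Measure (Ed d)) (hμbar : μbar ∈ P2 d)
    (hμbarac : μbar ≪ (volume : Measure (Ed d)))
    (hclose : W2 μbar μ ≤ ε) :
    Gsum F H (J τ (gradStep f' τ μ)) ≤ Gsum F H μbar +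
      ((ε / τ * (W2 μbar (gradStep f' τ μ)
        + W2 (J τ (gradStep f' τ μ)) (gradStep f' τ μ) + ε) : ℝ) : EReal) := by
  classical
  have hL0 : (0:ℝ) ≤ L := hL.le
  have hτL' : τ * L ≤ 1 := by
    rw [lt_div_iff₀ hL] at hτL
    nlinarith
  have hf'c : Continuous f' := hLip.continuous
  have hf'bound : ∀ x, ‖f' x - f' 0‖ ≤ L * ‖x‖ := by
    intro x
    have h := hLip.dist_le_mul x 0
    rwa [dist_eq_norm, dist_eq_norm, sub_zero, Real.coe_toNNReal _ hL0] at h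
  have hFcont : Continuous F := by
    have hdiff : Differentiable ℝ F := fun x => (hFgrad x).hasFDerivAt.differentiableAt
    exact hdiff.continuous
  have hFbound : ∀ x : Ed d, |F x| ≤ (|F 0| + ‖f' 0‖ + L / 2) * (1 + ‖x‖ ^ 2) := by
    intro x
    have hlow := aux_convex_grad F f' hFconv hFgrad 0 x
    have hup := aux_smooth F f' hFgrad hL0 hLip 0 x
    rw [zero_sub, inner_neg_right] at hlow
    rw [sub_zero] at hup
    have hip : |(inner ℝ (f' 0) x : ℝ)| ≤ ‖f' 0‖ * ‖x‖ := abs_real_inner_le_norm _ _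
    have hip1 := (abs_le.mp hip).1
    have hip2 := (abs_le.mp hip).2
    have hF01 := le_abs_self (F 0)
    have hF02 := neg_abs_le (F 0)
    rw [abs_le]
    constructor
    · nlinarith [mul_nonneg (norm_nonneg (f' 0)) (sq_nonneg (‖x‖ - 1)),
        mul_nonneg (abs_nonneg (F 0)) (sq_nonneg ‖x‖), sq_nonneg ‖x‖, hL0,
        mul_nonneg hL0 (sq_nonneg ‖x‖)]
    · nlinarith [mul_nonneg (norm_nonneg (f' 0)) (sq_nonneg (‖x‖ - 1)),
        mul_nonneg (abs_nonneg (F 0)) (sq_nonneg ‖x‖), sq_nonneg ‖x‖, hL0,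
        mul_nonneg hL0 (sq_nonneg ‖x‖)]
  have hFint : ∀ {ν : Measure (Ed d)}, ν ∈ P2 d → Integrable F ν :=
    fun hν => integrable_of_quad_bound hν hFcont hFbound
  set T : Ed d → Ed d := fun x => x - τ • f' x with hTdef
  have hTcont : Continuous T := continuous_id.sub (hf'c.const_smul τ)
  have hTm : Measurable T := hTcont.measurable
  set K : ℝ := 2 * (τ * ‖f' 0‖) ^ 2 + 2 * (1 + τ * L) ^ 2 with hKdef
  have hK0 : 0 ≤ K := by positivity
  have hTgrowth : ∀ x, ‖T x‖ ^ 2 ≤ K * (1 + ‖x‖ ^ 2) := by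
    intro x
    have h1 : ‖T x‖ ≤ ‖x‖ + τ * ‖f' x‖ := by
      calc ‖T x‖ = ‖x - τ • f' x‖ := by simp only [hTdef]
        _ ≤ ‖x‖ + ‖τ • f' x‖ := norm_sub_le _ _
        _ = ‖x‖ + τ * ‖f' x‖ := by rw [norm_smul, Real.norm_eq_abs, abs_of_pos hτ0]
    have h2 : ‖f' x‖ ≤ ‖f' 0‖ + L * ‖x‖ := by
      calc ‖f' x‖ = ‖f' 0 + (f' x - f' 0)‖ := by congr 1; abel
        _ ≤ ‖f' 0‖ + ‖f' x - f' 0‖ := norm_add_le _ _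
        _ ≤ ‖f' 0‖ + L * ‖x‖ := by linarith [hf'bound x]
    have h3 : ‖T x‖ ≤ τ * ‖f' 0‖ + (1 + τ * L) * ‖x‖ := by
      have h4 := mul_le_mul_of_nonneg_left h2 hτ0.le
      nlinarith
    have h5 : ‖T x‖ ^ 2 ≤ (τ * ‖f' 0‖ + (1 + τ * L) * ‖x‖) ^ 2 :=
      pow_le_pow_left₀ (norm_nonneg _) h3 2
    rw [hKdef]
    nlinarith [sq_nonneg (τ * ‖f' 0‖ - (1 + τ * L) * ‖x‖), sq_nonneg (τ * ‖f' 0‖ * ‖x‖),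
      sq_nonneg ((1 + τ * L) : ℝ), sq_nonneg (τ * ‖f' 0‖), sq_nonneg ‖x‖]
  set η := gradStep f' τ μ with hηdef
  have hηT : η = μ.map T := rfl
  have hηP2 : η ∈ P2 d := by
    rw [hηT]
    exact P2_map hμ hTm hK0 hTgrowth
  set μp := J τ η with hμpdef
  have hJKO := hJ τ hτ0 η hηP2
  have hμpP2 : μp ∈ P2 d := hJKO.1
  rcases eq_or_ne (H μbar) ⊤ with htop | hne
  · unfold Gsum
    rw [htop]
    have h2 : ((∫ x, F x ∂μbar : ℝ) : EReal) + ⊤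
        + ((ε / τ * (W2 μbar η + W2 μp η + ε) : ℝ) : EReal) = ⊤ := by
      rw [EReal.coe_add_top, EReal.top_add_coe]
    rw [h2]
    exact le_top
  have hbot := hHproper.1
  set r := (H μbar).toReal with hrdef
  have hHμbar : H μbar = (r : EReal) := (EReal.coe_toReal hne (hbot μbar)).symm
  have hmin := hJKO.2 μbar hμbar
  unfold JKOEnergy at hmin
  have hHμp_ne : H μp ≠ ⊤ := by
    intro htop'
    rw [htop', hHμbar, ← EReal.coe_add, EReal.top_add_coe] at hmin
    exact (EReal.coe_ne_top _) (top_le_iff.mp hmin)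
  set hp := (H μp).toReal with hpdef
  have hHμp : H μp = (hp : EReal) := (EReal.coe_toReal hHμp_ne (hbot μp)).symm
  rw [hHμp, hHμbar, ← EReal.coe_add, ← EReal.coe_add] at hmin
  have hminR : hp + 1 / (2 * τ) * W2 μp η ^ 2 ≤ r + 1 / (2 * τ) * W2 μbar η ^ 2 :=
    EReal.coe_le_coe_iff.mp hmin
  have ha0 : 0 ≤ W2 μbar η := W2_nonneg _ _
  have hc0 : 0 ≤ W2 μp η := W2_nonneg _ _
  have hB : W2 μbar μ ^ 2 ≤ ε ^ 2 := pow_le_pow_left₀ (W2_nonneg _ _) hclose 2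
  have hkey : ∀ δ : ℝ, 0 < δ →
      (∫ x, F x ∂μp) + hp ≤ (∫ x, F x ∂μbar) + r + 1 / (2 * τ) * (ε ^ 2 + 2 * δ) := by
    intro δ hδ
    obtain ⟨σ, hσc, hσfin, hσcost⟩ := exists_near_opt hμbar hμ hδ
    obtain ⟨ρ0, hρ0c, hρ0fin, hρ0cost⟩ := exists_near_opt hμpP2 hηP2 hδ
    haveI hσP : IsProbabilityMeasure σ := hσc.1
    haveI hρ0P : IsProbabilityMeasure ρ0 := hρ0c.1
    have hswap : Measurable (Prod.swap : Ed d × Ed d → Ed d × Ed d) := measurable_swap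
    set ρ : Measure (Ed d × Ed d) := ρ0.map Prod.swap with hρdef
    have hρc : IsCoupling ρ η μp := by
      refine ⟨Measure.isProbabilityMeasure_map hswap.aemeasurable, ?_, ?_⟩
      · rw [hρdef, Measure.map_map measurable_fst hswap]
        have he : Prod.fst ∘ Prod.swap = (Prod.snd : Ed d × Ed d → Ed d) := rfl
        rw [he]
        exact hρ0c.2.2
      · rw [hρdef, Measure.map_map measurable_snd hswap]
        have he : Prod.snd ∘ Prod.swap = (Prod.fst : Ed d × Ed d → Ed d) := rfl
        rw [he]
        exact hρ0c.2.1
    haveI hρP : IsProbabilityMeasure ρ := hρc.1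
    have hfstρ : ρ.map Prod.fst = (σ.map Prod.snd).map T := by
      rw [hρc.2.1, hσc.2.2]
      exact hηT
    obtain ⟨γ, hγ1, hγ2⟩ := glue hTm σ ρ hfstρ
    set m : (Ed d × Ed d) × Ed d → Ed d × Ed d := fun z => (T z.1.2, z.2) with hmdef
    have hmm : Measurable m :=
      (hTm.comp (measurable_snd.comp measurable_fst)).prodMk measurable_snd
    set Φρ : Ed d × Ed d → ℝ := fun p => F p.2 - 1 / (2 * τ) * ‖p.2 - p.1‖ ^ 2 with hΦρdef
    set Φσ : Ed d × Ed d → ℝ :=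
      fun p => F p.1 + 1 / (2 * τ) * (‖p.2 - p.1‖ ^ 2 - ‖p.1 - T p.2‖ ^ 2) with hΦσdef
    have hΦρcont : Continuous Φρ := by
      rw [hΦρdef]
      exact (hFcont.comp continuous_snd).sub
        (continuous_const.mul ((continuous_snd.sub continuous_fst).norm.pow 2))
    have hΦσcont : Continuous Φσ := by
      rw [hΦσdef]
      exact (hFcont.comp continuous_fst).add
        (continuous_const.mul (((continuous_snd.sub continuous_fst).norm.pow 2).sub
          ((continuous_fst.sub (hTcont.comp continuous_snd)).norm.pow 2)))
    have hIρF : Integrable (fun p : Ed d × Ed d => F p.2) ρ :=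
      integrable_comp_snd hρc (hFint hμpP2)
    have hqcont : Continuous fun p : Ed d × Ed d => ‖p.2 - p.1‖ ^ 2 :=
      (continuous_snd.sub continuous_fst).norm.pow 2
    have hqbound : ∀ p : Ed d × Ed d, |‖p.2 - p.1‖ ^ 2| ≤ 2 * (1 + ‖p.1‖ ^ 2 + ‖p.2‖ ^ 2) := by
      intro p
      rw [abs_of_nonneg (sq_nonneg _)]
      have h2 := norm_sub_le p.2 p.1
      nlinarith [sq_nonneg (‖p.2‖ - ‖p.1‖), pow_le_pow_left₀ (norm_nonneg (p.2 - p.1)) h2 2,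
        sq_nonneg ‖p.1‖, sq_nonneg ‖p.2‖]
    have hIρq : Integrable (fun p : Ed d × Ed d => ‖p.2 - p.1‖ ^ 2) ρ :=
      coupling_integrable hρc hηP2 hμpP2 hqcont hqbound
    have hIρ : Integrable Φρ ρ := by
      rw [hΦρdef]
      exact hIρF.sub (hIρq.const_mul _)
    have hIσF : Integrable (fun p : Ed d × Ed d => F p.1) σ :=
      integrable_comp_fst hσc (hFint hμbar)
    have hIσq : Integrable (fun p : Ed d × Ed d => ‖p.2 - p.1‖ ^ 2) σ :=
      coupling_integrable hσc hμbar hμ hqcont hqbound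
    have hIσS : Integrable (fun p : Ed d × Ed d => ‖p.1 - T p.2‖ ^ 2) σ := by
      refine coupling_integrable hσc hμbar hμ
        ((continuous_fst.sub (hTcont.comp continuous_snd)).norm.pow 2) (C := 2 + 2 * K) ?_
      intro p
      rw [abs_of_nonneg (sq_nonneg _)]
      have h1 : ‖p.1 - T p.2‖ ^ 2 ≤ 2 * ‖p.1‖ ^ 2 + 2 * ‖T p.2‖ ^ 2 := by
        have h2 := norm_sub_le p.1 (T p.2)
        nlinarith [sq_nonneg (‖p.1‖ - ‖T p.2‖), pow_le_pow_left₀ (norm_nonneg (p.1 - T p.2)) h2 2]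
      have h3 := hTgrowth p.2
      nlinarith [sq_nonneg ‖p.1‖, sq_nonneg ‖p.2‖, hK0, mul_nonneg hK0 (sq_nonneg ‖p.1‖)]
    have hIσ : Integrable Φσ σ := by
      rw [hΦσdef]
      exact hIσF.add ((hIσq.sub hIσS).const_mul _)
    have hρmap : Integrable Φρ (γ.map m) := by rwa [hγ2]
    have hint1 : Integrable (fun z => Φρ (m z)) γ :=
      (integrable_map_measure hρmap.aestronglyMeasurable hmm.aemeasurable).mp hρmap
    have hσmap : Integrable Φσ (γ.map Prod.fst) := by rwa [hγ1]
    have hint2 : Integrable (fun z : (Ed d × Ed d) × Ed d => Φσ z.1) γ :=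
      (integrable_map_measure hσmap.aestronglyMeasurable measurable_fst.aemeasurable).mp hσmap
    have hpt : ∀ z : (Ed d × Ed d) × Ed d, Φρ (m z) ≤ Φσ z.1 := by
      intro z
      have hz := aux_pointwise F f' hFconv hFgrad hL hLip hτ0 hτL' z.1.1 z.1.2 z.2
      simpa [hΦρdef, hΦσdef, hmdef, hTdef] using hz
    have hmono : ∫ z, Φρ (m z) ∂γ ≤ ∫ z, Φσ z.1 ∂γ := integral_mono hint1 hint2 hpt
    have hv1 : ∫ p, Φρ p ∂ρ = ∫ z, Φρ (m z) ∂γ := by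
      rw [← hγ2, integral_map hmm.aemeasurable hρmap.aestronglyMeasurable]
    have hv2 : ∫ p, Φσ p ∂σ = ∫ z, Φσ z.1 ∂γ := by
      rw [← hγ1, integral_map measurable_fst.aemeasurable hσmap.aestronglyMeasurable]
    have hΦ : ∫ p, Φρ p ∂ρ ≤ ∫ p, Φσ p ∂σ := by
      rw [hv1, hv2]; exact hmono
    have hsplit1 : ∫ p, Φρ p ∂ρ
        = (∫ x, F x ∂μp) - 1 / (2 * τ) * ∫ p, ‖p.2 - p.1‖ ^ 2 ∂ρ := by
      have hIρq2 : Integrable (fun p : Ed d × Ed d => 1 / (2 * τ) * ‖p.2 - p.1‖ ^ 2) ρ :=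
        hIρq.const_mul _
      rw [hΦρdef]
      rw [integral_sub hIρF hIρq2, integral_const_mul,
        integral_comp_snd hρc (hFint hμpP2).aestronglyMeasurable]
    have hsplit2 : ∫ p, Φσ p ∂σ
        = (∫ x, F x ∂μbar) + 1 / (2 * τ) *
          ((∫ p, ‖p.2 - p.1‖ ^ 2 ∂σ) - ∫ p, ‖p.1 - T p.2‖ ^ 2 ∂σ) := by
      have hIσd : Integrable (fun p : Ed d × Ed d => ‖p.2 - p.1‖ ^ 2 - ‖p.1 - T p.2‖ ^ 2) σ :=
        hIσq.sub hIσS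
      have hIσd2 : Integrable
          (fun p : Ed d × Ed d => 1 / (2 * τ) * (‖p.2 - p.1‖ ^ 2 - ‖p.1 - T p.2‖ ^ 2)) σ :=
        hIσd.const_mul _
      rw [hΦσdef]
      rw [integral_add hIσF hIσd2, integral_const_mul,
        integral_sub hIσq hIσS, integral_comp_fst hσc (hFint hμbar).aestronglyMeasurable]
    have hCρ : ∫ p, ‖p.2 - p.1‖ ^ 2 ∂ρ ≤ W2 μp η ^ 2 + δ := by
      have h1 : ∫ p, ‖p.2 - p.1‖ ^ 2 ∂ρ = ∫ z, ‖z.1 - z.2‖ ^ 2 ∂ρ0 := by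
        rw [hρdef, integral_map hswap.aemeasurable hqcont.aestronglyMeasurable]
        simp only [Prod.fst_swap, Prod.snd_swap]
      rw [h1, cost_toReal]
      exact hρ0cost
    have hCσ : ∫ p, ‖p.2 - p.1‖ ^ 2 ∂σ ≤ ε ^ 2 + δ := by
      have h1 : (fun p : Ed d × Ed d => ‖p.2 - p.1‖ ^ 2) = fun p => ‖p.1 - p.2‖ ^ 2 :=
        funext fun p => by rw [norm_sub_rev]
      rw [h1, cost_toReal]
      nlinarith [hσcost]
    have hSσ : W2 μbar η ^ 2 ≤ ∫ p, ‖p.1 - T p.2‖ ^ 2 ∂σ := by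
      set e : Ed d × Ed d → Ed d × Ed d := fun p => (p.1, T p.2) with hedef
      have hem : Measurable e := measurable_fst.prodMk (hTm.comp measurable_snd)
      have hc' : IsCoupling (σ.map e) μbar η := by
        refine ⟨Measure.isProbabilityMeasure_map hem.aemeasurable, ?_, ?_⟩
        · rw [Measure.map_map measurable_fst hem]
          have h : Prod.fst ∘ e = (Prod.fst : Ed d × Ed d → Ed d) := rfl
          rw [h]
          exact hσc.2.1
        · rw [Measure.map_map measurable_snd hem]
          have h : Prod.snd ∘ e = T ∘ (Prod.snd : Ed d × Ed d → Ed d) := rfl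
          rw [h, ← Measure.map_map hTm measurable_snd, hσc.2.2]
          exact hηT.symm
      have hfin' : Wcost 2 (σ.map e) < ⊤ := coupling_cost_finite hc' hμbar hηP2
      have h2 : ∫ z, ‖z.1 - z.2‖ ^ 2 ∂(σ.map e) = ∫ p, ‖p.1 - T p.2‖ ^ 2 ∂σ := by
        rw [integral_map hem.aemeasurable
          (Continuous.aestronglyMeasurable (f := fun z : Ed d × Ed d => ‖z.1 - z.2‖ ^ 2) ((continuous_fst.sub continuous_snd).norm.pow 2))]
      calc W2 μbar η ^ 2 ≤ (Wcost 2 (σ.map e)).toReal := W2_sq_le_cost hc' hfin'.ne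
        _ = ∫ p, ‖p.1 - T p.2‖ ^ 2 ∂σ := by rw [← cost_toReal, h2]
    have h2τ : (0:ℝ) < 1 / (2 * τ) := by positivity
    have hF1 : (∫ x, F x ∂μp) - 1 / (2 * τ) * ∫ p, ‖p.2 - p.1‖ ^ 2 ∂ρ
        ≤ (∫ x, F x ∂μbar) + 1 / (2 * τ) *
          ((∫ p, ‖p.2 - p.1‖ ^ 2 ∂σ) - ∫ p, ‖p.1 - T p.2‖ ^ 2 ∂σ) := by
      rw [← hsplit1, ← hsplit2]
      exact hΦ
    have e1 := mul_le_mul_of_nonneg_left hCρ h2τ.le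
    have e2 := mul_le_mul_of_nonneg_left hCσ h2τ.le
    have e3 := mul_le_mul_of_nonneg_left hSσ h2τ.le
    have r1 : 1 / (2 * τ) * (W2 μp η ^ 2 + δ)
        = 1 / (2 * τ) * W2 μp η ^ 2 + 1 / (2 * τ) * δ := by ring
    have r2 : 1 / (2 * τ) * (ε ^ 2 + δ) = 1 / (2 * τ) * ε ^ 2 + 1 / (2 * τ) * δ := by ring
    have r3 : 1 / (2 * τ) * ((∫ p, ‖p.2 - p.1‖ ^ 2 ∂σ) - ∫ p, ‖p.1 - T p.2‖ ^ 2 ∂σ)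
        = 1 / (2 * τ) * (∫ p, ‖p.2 - p.1‖ ^ 2 ∂σ)
          - 1 / (2 * τ) * ∫ p, ‖p.1 - T p.2‖ ^ 2 ∂σ := by ring
    have r4 : 1 / (2 * τ) * (ε ^ 2 + 2 * δ)
        = 1 / (2 * τ) * ε ^ 2 + 2 * (1 / (2 * τ) * δ) := by ring
    linarith
  have hfinal : (∫ x, F x ∂μp) + hp ≤ (∫ x, F x ∂μbar) + r + ε ^ 2 / (2 * τ) := by
    by_contra hcon
    push_neg at hcon
    set A := (∫ x, F x ∂μp) + hp with hAdef
    set B := (∫ x, F x ∂μbar) + r + ε ^ 2 / (2 * τ) with hBdef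
    clear_value A B
    have hd : 0 < (A - B) / 2 := by linarith
    have h := hkey (τ * ((A - B) / 2)) (mul_pos hτ0 hd)
    have hsimp : 1 / (2 * τ) * (ε ^ 2 + 2 * (τ * ((A - B) / 2)))
        = ε ^ 2 / (2 * τ) + (A - B) / 2 := by
      field_simp
    rw [hsimp] at h
    linarith [h, hBdef]
  have hgoalR : (∫ x, F x ∂μp) + hp
      ≤ (∫ x, F x ∂μbar) + r + ε / τ * (W2 μbar η + W2 μp η + ε) := by
    have t1 : 0 ≤ ε / τ * W2 μbar η := by positivity
    have t2 : 0 ≤ ε / τ * W2 μp η := by positivity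
    have t3 : ε / τ * (W2 μbar η + W2 μp η + ε)
        = ε / τ * W2 μbar η + ε / τ * W2 μp η + ε ^ 2 / τ := by ring
    have t4 : ε ^ 2 / (2 * τ) ≤ ε ^ 2 / τ := by
      rw [div_le_div_iff₀ (by positivity) (by positivity)]
      nlinarith [sq_nonneg ε]
    linarith
  unfold Gsum
  rw [hHμp, hHμbar, ← EReal.coe_add, ← EReal.coe_add, ← EReal.coe_add]
  exact EReal.coe_le_coe_iff.mpr hgoalR
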